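/- Let P be a property of separable C*-algebras that is preserved under sequential inductive limits with injective connecting maps and is preserved by quotients of separable C*-algebras, meaning: whenever q' : E' → D' is a surjective *-homomorphism between separable C*-algebras and E' satisfies P, then D' satisfies P. Then the property 'separably satisfies P' is preserved by quotients among all C*-algebras: if a C*-algebra A separably satisfies P and q : A → C is a surjective *-homomorphism onto a C*-algebra C, then C separably satisfies P. -/

import Mathlib

/-!
Given a separable `T₀ ⊆ C`, lift a countable dense subset of it to `A` and enclose the lift in a
separable subalgebra `S₀` satisfying `P`; if `q(S)` is closed for some separable `S ≥ S₀`
satisfying `P`, then `q(S) ⊇ T₀` is a quotient of `S` and we are done.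

Closedness of `q(S)` is arranged without the theory of quotient C*-algebras. By the open mapping
theorem every `c ∈ C` has a preimage of norm `≤ K ‖c‖`. Starting from `S₀`, let `Sₙ₊₁ ⊇ Sₙ` be a
separable subalgebra satisfying `P` that contains such bounded preimages of `q(Dₙ)`, for a
countable dense `Dₙ ⊆ Sₙ`. In the closure `S` of `⋃ Sₙ`, which satisfies `P` by the
inductive-limit hypothesis, the elements `x` with `‖x‖ ≤ K ‖q x‖` have dense image in `q(S)`;
summing a geometric series of approximate preimages then shows that `q(S)` is closed.
-/

open TopologicalSpace

universe u

/-- A property of C*-algebras: a predicate on (non-unital) C*-algebras. -/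
abbrev CStarProp : Type (u + 1) := ∀ (B : Type u) [NonUnitalCStarAlgebra B], Prop

/-- Invariance of a property of C*-algebras under *-isomorphism. -/
def CStarProp.IsoInvariant (P : CStarProp.{u}) : Prop :=
  ∀ (B C : Type u) [NonUnitalCStarAlgebra B] [NonUnitalCStarAlgebra C],
    (B ≃⋆ₐ[ℂ] C) → P B → P C

/-- `P` holds for a closed star-subalgebra of a C*-algebra, regarded as a
C*-algebra in its own right. -/
def SatSub {A : Type u} [NonUnitalCStarAlgebra A] (P : CStarProp.{u})
    (S : NonUnitalStarSubalgebra ℂ A) (hS : IsClosed (S : Set A)) : Prop :=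
  letI : IsClosed (S : Set A) := hS
  P S

/-- `P` is preserved under sequential inductive limits with injective connecting maps:
for every C*-algebra `C` and every increasing sequence of separable closed
star-subalgebras of `C` each satisfying `P`, the closure of their union satisfies `P`. -/
def LimitClosed (P : CStarProp.{u}) : Prop :=
  ∀ (C : Type u) [NonUnitalCStarAlgebra C] (S : ℕ → NonUnitalStarSubalgebra ℂ C),
    Monotone S →
    ∀ (hcl : ∀ n, IsClosed (S n : Set C)),
    (∀ n, SeparableSpace (S n)) →
    (∀ n, SatSub P (S n) (hcl n)) →
    ∀ (T : NonUnitalStarSubalgebra ℂ C) (hT : (T : Set C) = closure (⋃ n, (S n : Set C))),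
      SatSub P T (by rw [hT]; exact isClosed_closure)

/-- `A` separably satisfies `P`: every separable closed star-subalgebra of `A` is
contained in a separable closed star-subalgebra of `A` satisfying `P`. -/
def SepSat (P : CStarProp.{u}) (A : Type u) [NonUnitalCStarAlgebra A] : Prop :=
  ∀ S₀ : NonUnitalStarSubalgebra ℂ A, IsClosed (S₀ : Set A) → SeparableSpace S₀ →
    ∃ (S : NonUnitalStarSubalgebra ℂ A) (hS : IsClosed (S : Set A)),
      SeparableSpace S ∧ S₀ ≤ S ∧ SatSub P S hS

open Filter Topology

theorem Subsemigroup.countable_closure {M : Type*} [Semigroup M] {s : Set M} (hs : s.Countable) :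
    (closure s : Set M).Countable := by
  have := hs.to_subtype
  have : Countable (FreeSemigroup s) :=
    Function.Injective.countable (f := fun w : FreeSemigroup s => (w.head, w.tail))
      fun _ _ h => FreeSemigroup.ext (congrArg Prod.fst h) (congrArg Prod.snd h)
  refine (Set.countable_range (FreeSemigroup.lift ((↑) : s → M))).mono ?_
  rw [← MulHom.coe_srange, SetLike.coe_subset_coe, closure_le]
  exact fun x hx => MulHom.mem_srange.2 ⟨FreeSemigroup.of ⟨x, hx⟩, rfl⟩

theorem NonUnitalStarAlgebra.isSeparable_adjoin {R A : Type*} [CommSemiring R] [StarRing R]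
    [TopologicalSpace R] [SeparableSpace R] [NonUnitalSemiring A] [StarRing A] [Module R A]
    [IsScalarTower R A A] [SMulCommClass R A A] [StarModule R A] [TopologicalSpace A]
    [ContinuousAdd A] [ContinuousSMul R A] {s : Set A} (hs : s.Countable) :
    IsSeparable (adjoin R s : Set A) := by
  have hstar : (star s).Countable := by rw [← Set.image_star]; exact hs.image _
  have := (Subsemigroup.countable_closure (hs.union hstar)).isSeparable.span (R := R)
  rwa [← adjoin_eq_span] at this

theorem NonUnitalStarSubalgebra.coe_topologicalClosure_iSup {R A ι : Type*} [CommSemiring R]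
    [StarRing R] [NonUnitalSemiring A] [StarRing A] [Module R A] [IsScalarTower R A A]
    [SMulCommClass R A A] [StarModule R A] [TopologicalSpace A] [ContinuousStar A]
    [ContinuousConstSMul R A] [IsSemitopologicalSemiring A] [Nonempty ι]
    {S : ι → NonUnitalStarSubalgebra R A} (hS : Directed (· ≤ ·) S) :
    ((⨆ i, S i).topologicalClosure : Set A) = closure (⋃ i, (S i : Set A)) := by
  change closure ((⨆ i, S i : NonUnitalStarSubalgebra R A) : Set A) = _
  rw [coe_iSup_of_directed hS]

section ClosedImage

variable {E F 𝓕 G : Type*} [NormedAddCommGroup E] [CompleteSpace E] [NormedAddCommGroup F]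
  [FunLike 𝓕 E F] [AddMonoidHomClass 𝓕 E F] [SetLike G E] [AddSubgroupClass G E]
  {f : 𝓕} {S : G}

-- Iterating the approximation, the residuals `r^[n] y` shrink geometrically and the approximate
-- preimages of the residuals sum to an exact preimage of `y` in `S`.
theorem isClosed_image_of_approx_preimage (hf : Continuous f) (hS : IsClosed (S : Set E))
    {C : ℝ} (hC : 0 ≤ C)
    (happrox : ∀ y ∈ closure (f '' S), ∃ x ∈ S, ‖y - f x‖ ≤ ‖y‖ / 2 ∧ ‖x‖ ≤ C * ‖y‖) :
    IsClosed (f '' S) := by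
  have hsub : ∀ y ∈ closure (f '' S), ∀ x ∈ S, y - f x ∈ closure (f '' S) := by
    intro y hy x hx
    refine map_mem_closure₂ continuous_sub hy (subset_closure (Set.mem_image_of_mem f hx)) ?_
    rintro _ ⟨a, ha, rfl⟩ _ ⟨b, hb, rfl⟩
    exact ⟨a - b, sub_mem ha hb, map_sub f a b⟩
  choose! g hgS hg hgC using happrox
  refine isClosed_of_closure_subset fun y hy => ?_
  set r : F → F := fun z => z - f (g z)
  have hr : ∀ n, r^[n] y ∈ closure (f '' S) ∧ ‖r^[n] y‖ ≤ (1 / 2) ^ n * ‖y‖ := by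
    intro n
    induction n with
    | zero => simpa using hy
    | succ n ih =>
      rw [Function.iterate_succ_apply']
      refine ⟨hsub _ ih.1 _ (hgS _ ih.1), ?_⟩
      calc ‖r (r^[n] y)‖ ≤ ‖r^[n] y‖ / 2 := hg _ ih.1
        _ ≤ (1 / 2) ^ (n + 1) * ‖y‖ := by rw [pow_succ]; linarith [ih.2]
  set u : ℕ → E := fun n => g (r^[n] y)
  have hu_norm : ∀ n, ‖u n‖ ≤ C * ‖y‖ * (1 / 2) ^ n := fun n =>
    calc ‖u n‖ ≤ C * ‖r^[n] y‖ := hgC _ (hr n).1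
      _ ≤ C * ((1 / 2) ^ n * ‖y‖) := mul_le_mul_of_nonneg_left (hr n).2 hC
      _ = C * ‖y‖ * (1 / 2) ^ n := by ring
  have hu : HasSum u (∑' n, u n) :=
    (Summable.of_norm_bounded (summable_geometric_two.mul_left _) hu_norm).hasSum
  have hpartial : ∀ n, f (∑ i ∈ Finset.range n, u i) = y - r^[n] y := by
    intro n
    induction n with
    | zero => simp
    | succ n ih =>
      rw [Finset.sum_range_succ, map_add, ih, Function.iterate_succ_apply']
      change y - r^[n] y + f (g (r^[n] y)) = y - (r^[n] y - f (g (r^[n] y)))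
      abel
  refine ⟨∑' n, u n, ?_, ?_⟩
  · exact hS.mem_of_tendsto hu.tendsto_sum_nat
      (Eventually.of_forall fun n => sum_mem fun i _ => hgS _ (hr i).1)
  · have hlim : Tendsto (fun n => y - r^[n] y) atTop (𝓝 (y - 0)) := by
      refine tendsto_const_nhds.sub (squeeze_zero_norm (fun n => (hr n).2) ?_)
      simpa using (tendsto_pow_atTop_nhds_zero_of_lt_one (r := (1 / 2 : ℝ)) (by norm_num)
        (by norm_num)).mul_const ‖y‖
    rw [sub_zero] at hlim
    refine tendsto_nhds_unique ?_ hlim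
    simpa only [Function.comp_def, hpartial] using (hf.tendsto _).comp hu.tendsto_sum_nat

theorem isClosed_image_of_dense_image_bounded (hf : Continuous f) (hS : IsClosed (S : Set E))
    {K : ℝ} (hK : 0 ≤ K) (hdense : f '' S ⊆ closure (f '' {x | x ∈ S ∧ ‖x‖ ≤ K * ‖f x‖})) :
    IsClosed (f '' S) := by
  refine isClosed_image_of_approx_preimage hf hS (by positivity : 0 ≤ K * 2) fun y hy => ?_
  rcases eq_or_ne y 0 with rfl | hy0
  · exact ⟨0, zero_mem S, by simp, by simp⟩
  obtain ⟨_, ⟨x, ⟨hxS, hxK⟩, rfl⟩, hxy⟩ := Metric.mem_closure_iff.1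
    (closure_minimal hdense isClosed_closure hy) (‖y‖ / 2) (by positivity)
  rw [dist_eq_norm] at hxy
  have hfx : ‖f x‖ ≤ 2 * ‖y‖ := by
    have := norm_sub_le y (y - f x)
    rw [sub_sub_cancel] at this
    linarith [norm_nonneg y]
  refine ⟨x, hxS, hxy.le, ?_⟩
  calc ‖x‖ ≤ K * ‖f x‖ := hxK
    _ ≤ K * (2 * ‖y‖) := mul_le_mul_of_nonneg_left hfx hK
    _ = K * 2 * ‖y‖ := by ring

end ClosedImage

open scoped CStarAlgebra

def QuotientClosed (P : CStarProp.{u}) : Prop :=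
  ∀ (E' D' : Type u) [NonUnitalCStarAlgebra E'] [NonUnitalCStarAlgebra D']
    (q' : E' →⋆ₙₐ[ℂ] D'), Function.Surjective q' →
    SeparableSpace E' → SeparableSpace D' → P E' → P D'

def SepSatSub {A : Type u} [NonUnitalCStarAlgebra A] (P : CStarProp.{u})
    (S : NonUnitalStarSubalgebra ℂ A) : Prop :=
  ∃ hS : IsClosed (S : Set A), SeparableSpace S ∧ SatSub P S hS

section SepSat

variable {P : CStarProp.{u}} {A C : Type u} [NonUnitalCStarAlgebra A] [NonUnitalCStarAlgebra C]

theorem SepSatSub.isSeparable {S : NonUnitalStarSubalgebra ℂ A} (hS : SepSatSub P S) :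
    IsSeparable (S : Set A) :=
  have := hS.2.1
  .of_subtype _

theorem SepSat.exists_sepSatSub_superset (hA : SepSat P A) {s : Set A} (hs : IsSeparable s) :
    ∃ S : NonUnitalStarSubalgebra ℂ A, SepSatSub P S ∧ s ⊆ S := by
  obtain ⟨c, hc, hsc⟩ := hs
  let S₀ := (NonUnitalStarAlgebra.adjoin ℂ c).topologicalClosure
  have hS₀ : IsSeparable (S₀ : Set A) :=
    (NonUnitalStarAlgebra.isSeparable_adjoin hc).closure
  obtain ⟨S, hSc, hSsep, hS₀S, hSP⟩ :=
    hA S₀ (NonUnitalStarSubalgebra.isClosed_topologicalClosure _) hS₀.separableSpace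
  refine ⟨S, ⟨hSc, hSsep, hSP⟩, hsc.trans fun x hx => hS₀S ?_⟩
  exact closure_mono (NonUnitalStarAlgebra.subset_adjoin ℂ c) hx

theorem LimitClosed.sepSatSub_topologicalClosure_iSup (hlim : LimitClosed P)
    {S : ℕ → NonUnitalStarSubalgebra ℂ A} (hmono : Monotone S) (hS : ∀ n, SepSatSub P (S n)) :
    SepSatSub P (⨆ n, S n).topologicalClosure := by
  choose hSc hSsep hSP using hS
  have hcoe := NonUnitalStarSubalgebra.coe_topologicalClosure_iSup hmono.directed_le
  refine ⟨NonUnitalStarSubalgebra.isClosed_topologicalClosure _, ?_,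
    hlim A S hmono hSc hSsep hSP _ hcoe⟩
  have := (IsSeparable.iUnion fun n => IsSeparable.of_subtype (S n : Set A)).closure
  rw [← hcoe] at this
  exact this.separableSpace

theorem SepSatSub.map (hquot : QuotientClosed P) {S : NonUnitalStarSubalgebra ℂ A}
    (hS : SepSatSub P S) (q : A →⋆ₙₐ[ℂ] C) (hclosed : IsClosed (q '' S)) :
    SepSatSub P (S.map q) := by
  obtain ⟨hSc, hSsep, hSP⟩ := hS
  have hTc : IsClosed (S.map q : Set C) := by rwa [NonUnitalStarSubalgebra.coe_map]
  have := hSc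
  have := hTc
  let q' : S →⋆ₙₐ[ℂ] S.map q := NonUnitalStarAlgHom.codRestrict
    (q.comp (NonUnitalStarSubalgebraClass.subtype S)) _ fun x => ⟨x, x.2, rfl⟩
  have hq' : Function.Surjective q' := by
    rintro ⟨_, x, hx, rfl⟩
    exact ⟨⟨x, hx⟩, rfl⟩
  have hTsep : SeparableSpace (S.map q) := hq'.denseRange.separableSpace (map_continuous q')
  exact ⟨hTc, hTsep, hquot S (S.map q) q' hq' hSsep hTsep hSP⟩

theorem SepSat.exists_le_sepSatSub_bounded_approx_lifts (hA : SepSat P A)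
    (q : A →⋆ₙₐ[ℂ] C) {K : ℝ} (hlift : ∀ c, ∃ a, q a = c ∧ ‖a‖ ≤ K * ‖c‖)
    {S : NonUnitalStarSubalgebra ℂ A} (hS : IsSeparable (S : Set A)) :
    ∃ S', SepSatSub P S' ∧ S ≤ S' ∧
      q '' S ⊆ closure (q '' {x | x ∈ S' ∧ ‖x‖ ≤ K * ‖q x‖}) := by
  choose ℓ hℓq hℓK using hlift
  obtain ⟨D, hD, hSD⟩ := hS
  obtain ⟨S', hS', hDS'⟩ :=
    hA.exists_sepSatSub_superset (hD.union ((hD.image q).image ℓ)).isSeparable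
  refine ⟨S', hS', fun x hx => closure_minimal (Set.subset_union_left.trans hDS') hS'.1 (hSD hx),
    ?_⟩
  refine (Set.image_mono hSD).trans <| (image_closure_subset_closure_image (map_continuous q)).trans
    (closure_mono ?_)
  rintro _ ⟨d, hd, rfl⟩
  refine ⟨ℓ (q d), ⟨hDS' (Or.inr ⟨q d, ⟨d, hd, rfl⟩, rfl⟩), ?_⟩, hℓq _⟩
  rw [hℓq]
  exact hℓK _

theorem SepSat.exists_le_sepSatSub_isClosed_image (hA : SepSat P A) (hlim : LimitClosed P)
    {q : A →⋆ₙₐ[ℂ] C} (hq : Function.Surjective q) {S₀ : NonUnitalStarSubalgebra ℂ A}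
    (hS₀ : SepSatSub P S₀) :
    ∃ S, SepSatSub P S ∧ S₀ ≤ S ∧ IsClosed (q '' S) := by
  obtain ⟨K, hK, hlift⟩ := ContinuousLinearMap.exists_preimage_norm_le
    (⟨LinearMapClass.linearMap q, map_continuous q⟩ : A →L[ℂ] C) hq
  choose! next hnext using fun S (hS : SepSatSub P S) =>
    hA.exists_le_sepSatSub_bounded_approx_lifts q hlift hS.isSeparable
  set T : ℕ → NonUnitalStarSubalgebra ℂ A := fun n => next^[n] S₀
  have hT_succ : ∀ n, T (n + 1) = next (T n) := fun n => Function.iterate_succ_apply' _ _ _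
  have hT : ∀ n, SepSatSub P (T n) := by
    intro n
    induction n with
    | zero => exact hS₀
    | succ n ih => rw [hT_succ]; exact (hnext _ ih).1
  have hmono : Monotone T := monotone_nat_of_le_succ fun n => hT_succ n ▸ (hnext _ (hT n)).2.1
  set S := (⨆ n, T n).topologicalClosure
  have hTS : ∀ n, T n ≤ S := fun n =>
    (le_iSup T n).trans (NonUnitalStarSubalgebra.le_topologicalClosure _)
  refine ⟨S, hlim.sepSatSub_topologicalClosure_iSup hmono hT, hTS 0,
    isClosed_image_of_dense_image_bounded (map_continuous q)
      (NonUnitalStarSubalgebra.isClosed_topologicalClosure _) hK.le ?_⟩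
  have hsub : ∀ n, q '' T n ⊆ closure (q '' {x | x ∈ S ∧ ‖x‖ ≤ K * ‖q x‖}) := fun n =>
    (hT_succ n ▸ (hnext _ (hT n)).2.2).trans
      (closure_mono (Set.image_mono fun x hx => ⟨hTS (n + 1) hx.1, hx.2⟩))
  rw [NonUnitalStarSubalgebra.coe_topologicalClosure_iSup hmono.directed_le]
  refine (image_closure_subset_closure_image (map_continuous q)).trans
    (closure_minimal ?_ isClosed_closure)
  rw [Set.image_iUnion]
  exact Set.iUnion_subset hsub

end SepSat

theorem sepSat_of_quotient_general {A C : Type u} [NonUnitalCStarAlgebra A] [NonUnitalCStarAlgebra C]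
    (P : CStarProp.{u})
    (hlim : LimitClosed P)
    (hquot : ∀ (E' D' : Type u) [NonUnitalCStarAlgebra E'] [NonUnitalCStarAlgebra D']
      (q' : E' →⋆ₙₐ[ℂ] D'), Function.Surjective q' →
      SeparableSpace E' → SeparableSpace D' → P E' → P D')
    (hA : SepSat P A)
    (q : A →⋆ₙₐ[ℂ] C) (hq : Function.Surjective q) :
    SepSat P C := by
  intro T₀ _ hT₀
  obtain ⟨X, hX, hT₀X⟩ := IsSeparable.of_subtype (T₀ : Set C)
  obtain ⟨S₀, hS₀, hXS₀⟩ :=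
    hA.exists_sepSatSub_superset (hX.image (Function.surjInv hq)).isSeparable
  obtain ⟨S, hS, hS₀S, hclosed⟩ := hA.exists_le_sepSatSub_isClosed_image hlim hq hS₀
  obtain ⟨hTc, hTsep, hTP⟩ := hS.map hquot q hclosed
  refine ⟨S.map q, hTc, hTsep, fun c hc => closure_minimal ?_ hTc (hT₀X hc), hTP⟩
  exact fun x hx => ⟨_, hS₀S (hXS₀ ⟨x, hx, rfl⟩), Function.surjInv_eq hq x⟩

/-- If `P` is a property of separable C*-algebras preserved under sequential
inductive limits with injective connecting maps and preserved by quotients of separable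
C*-algebras, then 'separably satisfies `P`' is preserved by quotients among all C*-algebras:
if `A` separably satisfies `P` and `q : A → C` is a surjective *-homomorphism, then `C`
separably satisfies `P`. -/
theorem sepSat_of_quotient {A C : Type u} [NonUnitalCStarAlgebra A] [NonUnitalCStarAlgebra C]
    (P : CStarProp.{u})
    (hiso : P.IsoInvariant)
    (hlim : LimitClosed P)
    (hquot : ∀ (E' D' : Type u) [NonUnitalCStarAlgebra E'] [NonUnitalCStarAlgebra D']
      (q' : E' →⋆ₙₐ[ℂ] D'), Function.Surjective q' →
      SeparableSpace E' → SeparableSpace D' → P E' → P D')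
    (hA : SepSat P A)
    (q : A →⋆ₙₐ[ℂ] C) (hq : Function.Surjective q) :
    SepSat P C :=
  sepSat_of_quotient_general P hlim hquot hA q hq
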